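/- Let β ≥ 0 and γ ≥ 1, and let (a,b) be a binary pair of length N = 10^β·26^γ obtained by the recursion (a^{(0)},b^{(0)}) = K_{26} and, at each subsequent step, (a^{(j+1)},b^{(j+1)}) = Turyn(K, (a^{(j)},b^{(j)})) where K ∈ {K_{10}, K_{26}}, applying K_{10} exactly β times and K_{26} exactly γ−1 times in any order. Define c_i = b_{N−1−i}, d_i = −a_{N−1−i}, e = a||c, f = b||d (length 2N). Let x_0, x_1, y_0, y_1 be complex numbers of modulus 1 satisfying x_0 − conj(y_1) = 0, x_1 + conj(y_0) = 0, x_0 = x_1, and conj(y_0) = −conj(y_1). Define g = (x_0, e_0, …, e_{2N−1}, y_0) and h = (x_1, f_0, …, f_{2N−1}, y_1) of length 2N+2. Then (g,h) is a (2N+2, 12N/26+1)-CZCP. -/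

import Mathlib

/-- Aperiodic cross-correlation at shift `τ` of two length-`L` real sequences
(indexed `0, …, L-1`); it vanishes for `τ ≥ L`. -/
noncomputable def rhoR (L : ℕ) (u v : ℕ → ℝ) (τ : ℕ) : ℝ :=
  ∑ k ∈ Finset.range (L - τ), u k * v (k + τ)

/-- A binary sequence of length `L`: all entries in `{+1, -1}`. -/
def IsBinary (L : ℕ) (u : ℕ → ℝ) : Prop := ∀ i < L, u i = 1 ∨ u i = -1

/-- `(u, v)` is a binary Golay complementary pair (GCP) of length `L`:
both are binary and the autocorrelation sums vanish for `1 ≤ τ ≤ L - 1`. -/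
noncomputable def IsGCP (L : ℕ) (u v : ℕ → ℝ) : Prop :=
  IsBinary L u ∧ IsBinary L v ∧
    ∀ τ : ℕ, 1 ≤ τ → τ ≤ L - 1 → rhoR L u u τ + rhoR L v v τ = 0

/-- `(u, v)` (length-`L` real sequences) is an `(L, Z)`-CZCP:
(C1) the autocorrelation sums vanish for `τ ∈ {1,…,Z} ∪ {L-Z,…,L-1}`, and
(C2) the cross-correlation sums vanish for `τ ∈ {L-Z,…,L-1}`. -/
noncomputable def IsCZCPR (L Z : ℕ) (u v : ℕ → ℝ) : Prop :=
  (∀ τ : ℕ, ((1 ≤ τ ∧ τ ≤ Z) ∨ (L - Z ≤ τ ∧ τ ≤ L - 1)) →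
    rhoR L u u τ + rhoR L v v τ = 0) ∧
  (∀ τ : ℕ, (L - Z ≤ τ ∧ τ ≤ L - 1) → rhoR L u v τ + rhoR L v u τ = 0)

/-- Aperiodic cross-correlation at shift `τ` of two length-`L` complex sequences
(indexed `0, …, L-1`); it vanishes for `τ ≥ L`. -/
noncomputable def rhoC (L : ℕ) (u v : ℕ → ℂ) (τ : ℕ) : ℂ :=
  ∑ k ∈ Finset.range (L - τ), u k * (starRingEnd ℂ) (v (k + τ))

/-- `(u, v)` (length-`L` complex sequences) is an `(L, Z)`-CZCP:
(C1) the autocorrelation sums vanish for `τ ∈ {1,…,Z} ∪ {L-Z,…,L-1}`, and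
(C2) the cross-correlation sums vanish for `τ ∈ {L-Z,…,L-1}`. -/
noncomputable def IsCZCP (L Z : ℕ) (u v : ℕ → ℂ) : Prop :=
  (∀ τ : ℕ, ((1 ≤ τ ∧ τ ≤ Z) ∨ (L - Z ≤ τ ∧ τ ≤ L - 1)) →
    rhoC L u u τ + rhoC L v v τ = 0) ∧
  (∀ τ : ℕ, (L - Z ≤ τ ∧ τ ≤ L - 1) → rhoC L u v τ + rhoC L v u τ = 0)

/-- First sequence of the length-10 Golay kernel `K₁₀`: `(+,+,-,+,-,+,-,-,+,+)`. -/
noncomputable def K10a : ℕ → ℝ := fun i =>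
  (([1, 1, -1, 1, -1, 1, -1, -1, 1, 1] : List ℝ).getD i 0)

/-- Second sequence of the length-10 Golay kernel `K₁₀`: `(+,+,-,+,+,+,+,+,-,-)`. -/
noncomputable def K10b : ℕ → ℝ := fun i =>
  (([1, 1, -1, 1, 1, 1, 1, 1, -1, -1] : List ℝ).getD i 0)

/-- First sequence of the length-26 Golay kernel `K₂₆`. -/
noncomputable def K26a : ℕ → ℝ := fun i =>
  (([1, 1, 1, 1, -1, 1, 1, -1, -1, 1, -1, 1, -1, 1, -1, -1, 1, -1, 1, 1, 1, -1, -1, 1, 1, 1] :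
    List ℝ).getD i 0)

/-- Second sequence of the length-26 Golay kernel `K₂₆`. -/
noncomputable def K26b : ℕ → ℝ := fun i =>
  (([1, 1, 1, 1, -1, 1, 1, -1, -1, 1, -1, 1, 1, 1, 1, 1, -1, 1, -1, -1, -1, 1, 1, -1, -1, -1] :
    List ℝ).getD i 0)

/-- Turyn's construction: given `(p, q)` of length `M` and `(c, d)` of length `K`, the
resulting pair `(e, f)` of length `K·M` is given (at index `kM + j`, i.e. `k = i / M`,
`j = i % M`) by `e_{kM+j} = c_k (p_j + q_j)/2 - d_{K-1-k} (q_j - p_j)/2` and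
`f_{kM+j} = d_k (p_j + q_j)/2 + c_{K-1-k} (q_j - p_j)/2`. -/
noncomputable def turynPair (M K : ℕ) (p q c d : ℕ → ℝ) : (ℕ → ℝ) × (ℕ → ℝ) :=
  (fun i => c (i / M) * (p (i % M) + q (i % M)) / 2
      - d (K - 1 - i / M) * (q (i % M) - p (i % M)) / 2,
   fun i => d (i / M) * (p (i % M) + q (i % M)) / 2
      + c (K - 1 - i / M) * (q (i % M) - p (i % M)) / 2)

/-!
Turyn's construction multiplies correlations: writing a shift as `u * M + v` with `v < M`, the
autocorrelation sum of the Turyn pair at that shift is `S u * T v + S (u + 1) * T (M - v)`, where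
`S` and `T` are the autocorrelation sums of the outer and the inner pair, so complementarity is
inherited along the recursion. The construction also scales the pattern of `K₂₆` (first 12 entries
equal, last 12 opposite) to the first and last `6N/13` entries of `(a, b)`.

The pair `(a‖c, b‖d)` is again complementary. After the end entries are added, each sum in (C1) and
(C2) at the prescribed shifts is a vanishing middle correlation sum plus two boundary terms, and the
conditions on `x₀, x₁, y₀, y₁` cancel the boundary terms; for the shifts near `2N + 2` this uses
that `a` and `b` agree on their first `6N/13` entries.
-/

open Finset

def IsComplementary (L : ℕ) (a b : ℕ → ℝ) : Prop :=
  ∀ τ, 1 ≤ τ → rhoR L a a τ + rhoR L b b τ = 0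

def revSeq (L : ℕ) (x : ℕ → ℝ) : ℕ → ℝ := fun k => x (L - 1 - k)

theorem rhoR_eq_zero_of_le {L τ : ℕ} (h : L ≤ τ) (x y : ℕ → ℝ) : rhoR L x y τ = 0 := by
  simp [rhoR, Nat.sub_eq_zero_of_le h]

section Correlation

variable (L : ℕ) (x y z : ℕ → ℝ) (τ : ℕ)

theorem rhoR_add_left : rhoR L (x + y) z τ = rhoR L x z τ + rhoR L y z τ := by
  simp only [rhoR, Pi.add_apply, add_mul, sum_add_distrib]

theorem rhoR_sub_left : rhoR L (x - y) z τ = rhoR L x z τ - rhoR L y z τ := by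
  simp only [rhoR, Pi.sub_apply, sub_mul, sum_sub_distrib]

theorem rhoR_add_right : rhoR L x (y + z) τ = rhoR L x y τ + rhoR L x z τ := by
  simp only [rhoR, Pi.add_apply, mul_add, sum_add_distrib]

theorem rhoR_sub_right : rhoR L x (y - z) τ = rhoR L x y τ - rhoR L x z τ := by
  simp only [rhoR, Pi.sub_apply, mul_sub, sum_sub_distrib]

theorem rhoR_neg_left : rhoR L (-x) y τ = -rhoR L x y τ := by
  simp only [rhoR, Pi.neg_apply, neg_mul, sum_neg_distrib]

theorem rhoR_neg_right : rhoR L x (-y) τ = -rhoR L x y τ := by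
  simp only [rhoR, Pi.neg_apply, mul_neg, sum_neg_distrib]

theorem rhoR_revSeq_revSeq : rhoR L (revSeq L x) (revSeq L y) τ = rhoR L y x τ := by
  unfold rhoR revSeq
  rw [← sum_range_reflect]
  refine sum_congr rfl fun k hk => ?_
  rw [mem_range] at hk
  rw [show L - 1 - (L - τ - 1 - k) = k + τ by omega, show L - 1 - (L - τ - 1 - k + τ) = k by omega,
    mul_comm]

theorem rhoR_revSeq_right : rhoR L x (revSeq L y) τ = rhoR L y (revSeq L x) τ := by
  unfold rhoR revSeq
  rw [← sum_range_reflect]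
  refine sum_congr rfl fun k hk => ?_
  rw [mem_range] at hk
  rw [show L - 1 - (L - τ - 1 - k + τ) = k by omega, show L - τ - 1 - k = L - 1 - (k + τ) by omega,
    mul_comm]

theorem rhoR_revSeq_left : rhoR L (revSeq L x) y τ = rhoR L (revSeq L y) x τ := by
  unfold rhoR revSeq
  rw [← sum_range_reflect]
  refine sum_congr rfl fun k hk => ?_
  rw [mem_range] at hk
  rw [show L - 1 - (L - τ - 1 - k) = k + τ by omega, show L - τ - 1 - k + τ = L - 1 - k by omega,
    mul_comm]

end Correlation

def kroneckerSeq (M : ℕ) (x y : ℕ → ℝ) : ℕ → ℝ := fun i => x (i / M) * y (i % M)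

theorem sum_range_mul_add_sub {β : Type*} [AddCommMonoid β] (F : ℕ → β) (n : ℕ) {M v : ℕ}
    (hv : v ≤ M) :
    ∑ i ∈ range (n * M + (M - v)), F i =
      ∑ k ∈ range (n + 1), ∑ j ∈ range (M - v), F (k * M + j) +
        ∑ k ∈ range n, ∑ j ∈ range v, F (k * M + (M - v) + j) := by
  induction n with
  | zero => simp
  | succ n ih =>
    have hidx : ∀ j, n * M + (M - v) + v + j = (n + 1) * M + j := fun j => by
      rw [add_mul, one_mul]; omega
    rw [show (n + 1) * M + (M - v) = n * M + (M - v) + v + (M - v) by rw [add_mul, one_mul]; omega,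
      sum_range_add, sum_range_add, ih]
    simp only [sum_range_succ, hidx]
    abel

theorem kroneckerSeq_mul_add (M : ℕ) (x y : ℕ → ℝ) (k : ℕ) {j : ℕ} (hj : j < M) :
    kroneckerSeq M x y (k * M + j) = x k * y j := by
  have hM : 0 < M := by omega
  simp only [kroneckerSeq, mul_comm k M, Nat.mul_add_div hM, Nat.div_eq_of_lt hj, add_zero,
    Nat.mul_add_mod, Nat.mod_eq_of_lt hj]

-- A shift by `u * M + v` moves block `k` partly onto block `k + u` (inner shift `v`) and partly
-- onto block `k + u + 1` (inner shift `v - M`, i.e. `M - v` with `y` and `y'` exchanged).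
theorem rhoR_kroneckerSeq (x x' y y' : ℕ → ℝ) {M : ℕ} (K u : ℕ) {v : ℕ} (hv : v < M) :
    rhoR (K * M) (kroneckerSeq M x y) (kroneckerSeq M x' y') (u * M + v) =
      rhoR K x x' u * rhoR M y y' v + rhoR K x x' (u + 1) * rhoR M y' y (M - v) := by
  rcases lt_or_ge u K with hu | hu
  · obtain ⟨n, rfl⟩ : ∃ n, K = n + 1 + u := ⟨K - u - 1, by omega⟩
    have hlen : (n + 1 + u) * M - (u * M + v) = n * M + (M - v) := by
      rw [add_mul, add_mul, one_mul]; omega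
    rw [rhoR, hlen, sum_range_mul_add_sub _ _ hv.le]
    simp only [rhoR, show n + 1 + u - u = n + 1 by omega, show n + 1 + u - (u + 1) = n by omega,
      show M - (M - v) = v by omega, sum_mul_sum]
    congr 1 <;> refine sum_congr rfl fun k _ => sum_congr rfl fun j hj => ?_ <;>
      rw [mem_range] at hj
    · rw [show k * M + j + (u * M + v) = (k + u) * M + (j + v) by ring,
        kroneckerSeq_mul_add _ _ _ _ (by omega), kroneckerSeq_mul_add _ _ _ _ (by omega)]
      ring
    · rw [show k * M + (M - v) + j + (u * M + v) = (k + (u + 1)) * M + j by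
          zify [hv.le]; ring,
        add_assoc (k * M), kroneckerSeq_mul_add _ _ _ _ (by omega),
        kroneckerSeq_mul_add _ _ _ _ (by omega), add_comm j]
      ring
  · rw [rhoR_eq_zero_of_le (show K * M ≤ u * M + v by nlinarith), rhoR_eq_zero_of_le hu,
      rhoR_eq_zero_of_le (show K ≤ u + 1 by omega)]
    ring

theorem turynPair_eq (M K : ℕ) (p q c d : ℕ → ℝ) :
    turynPair M K p q c d =
      (kroneckerSeq M c (fun j => (p j + q j) / 2) -
          kroneckerSeq M (revSeq K d) (fun j => (q j - p j) / 2),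
        kroneckerSeq M d (fun j => (p j + q j) / 2) +
          kroneckerSeq M (revSeq K c) (fun j => (q j - p j) / 2)) := by
  ext i <;> simp only [turynPair, kroneckerSeq, revSeq, Pi.add_apply, Pi.sub_apply] <;> ring

theorem rhoR_half_sum_add_rhoR_half_diff (M : ℕ) (p q : ℕ → ℝ) (s : ℕ) :
    rhoR M (fun j => (p j + q j) / 2) (fun j => (p j + q j) / 2) s +
        rhoR M (fun j => (q j - p j) / 2) (fun j => (q j - p j) / 2) s =
      (rhoR M p p s + rhoR M q q s) / 2 := by
  simp only [rhoR, ← sum_add_distrib, sum_div]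
  exact sum_congr rfl fun _ _ => by ring

theorem rhoR_turynPair (p q c d : ℕ → ℝ) {M : ℕ} (K u : ℕ) {v : ℕ} (hv : v < M) :
    rhoR (K * M) (turynPair M K p q c d).1 (turynPair M K p q c d).1 (u * M + v) +
        rhoR (K * M) (turynPair M K p q c d).2 (turynPair M K p q c d).2 (u * M + v) =
      (rhoR K c c u + rhoR K d d u) * ((rhoR M p p v + rhoR M q q v) / 2) +
        (rhoR K c c (u + 1) + rhoR K d d (u + 1)) *
          ((rhoR M p p (M - v) + rhoR M q q (M - v)) / 2) := by
  rw [turynPair_eq]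
  simp only [rhoR_sub_left, rhoR_sub_right, rhoR_add_left, rhoR_add_right,
    rhoR_kroneckerSeq _ _ _ _ K u hv, rhoR_revSeq_revSeq]
  -- the mixed terms of `e` and of `f` cancel after reflecting the outer sequences
  rw [rhoR_revSeq_right K d c u, rhoR_revSeq_right K d c (u + 1), rhoR_revSeq_left K c d u,
    rhoR_revSeq_left K c d (u + 1)]
  linear_combination (rhoR K c c u + rhoR K d d u) * rhoR_half_sum_add_rhoR_half_diff M p q v +
    (rhoR K c c (u + 1) + rhoR K d d (u + 1)) * rhoR_half_sum_add_rhoR_half_diff M p q (M - v)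

theorem IsComplementary.turynPair {M K : ℕ} {p q c d : ℕ → ℝ} (hcd : IsComplementary K c d)
    (hpq : IsComplementary M p q) (hM : 0 < M) :
    IsComplementary (K * M) (turynPair M K p q c d).1 (turynPair M K p q c d).2 := by
  intro τ hτ
  have hdiv := Nat.div_add_mod' τ M
  rw [← hdiv, rhoR_turynPair p q c d K _ (Nat.mod_lt τ hM), hcd _ (Nat.le_add_left 1 _)]
  rcases Nat.eq_zero_or_pos (τ / M) with hu | hu
  · rw [hpq _ (by rw [hu, zero_mul, zero_add] at hdiv; omega)]
    ring
  · rw [hcd _ hu]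
    ring

def HeadEqTailNeg (L t : ℕ) (a b : ℕ → ℝ) : Prop :=
  (∀ i < t, a i = b i) ∧ ∀ i, L - t ≤ i → i < L → a i = -b i

theorem HeadEqTailNeg.turynPair {M K t : ℕ} {c d : ℕ → ℝ} (h : HeadEqTailNeg K t c d)
    (ht : t ≤ K) (hM : 0 < M) (p q : ℕ → ℝ) :
    HeadEqTailNeg (K * M) (t * M) (turynPair M K p q c d).1 (turynPair M K p q c d).2 := by
  obtain ⟨hhead, htail⟩ := h
  refine ⟨fun i hi => ?_, fun i hi₁ hi₂ => ?_⟩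
  · have hk : i / M < t := (Nat.div_lt_iff_lt_mul hM).2 hi
    simp only [_root_.turynPair]
    generalize i / M = k at hk ⊢
    rw [hhead k hk, htail (K - 1 - k) (by omega) (by omega)]
    ring
  · have hk₁ : K - t ≤ i / M := (Nat.le_div_iff_mul_le hM).2 (by rw [Nat.sub_mul]; omega)
    have hk₂ : i / M < K := (Nat.div_lt_iff_lt_mul hM).2 hi₂
    simp only [_root_.turynPair]
    generalize i / M = k at hk₁ hk₂ ⊢
    rw [htail k hk₁ hk₂, hhead (K - 1 - k) (by omega)]
    ring

theorem revSeq_sub_one_sub {L i : ℕ} (x : ℕ → ℝ) (hi : i < L) : revSeq L x (L - 1 - i) = x i := by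
  rw [revSeq, show L - 1 - (L - 1 - i) = i by omega]

def appendSeq (N : ℕ) (x y : ℕ → ℝ) : ℕ → ℝ := fun i => if i < N then x i else y (i - N)

section Append

variable {N : ℕ} (x y x' y' : ℕ → ℝ)

theorem appendSeq_of_lt {i : ℕ} (hi : i < N) : appendSeq N x y i = x i := if_pos hi

theorem appendSeq_of_le {i : ℕ} (hi : N ≤ i) : appendSeq N x y i = y (i - N) := if_neg (by omega)

theorem rhoR_appendSeq_of_le {τ : ℕ} (hτ : τ ≤ N) :
    rhoR (2 * N) (appendSeq N x y) (appendSeq N x' y') τ =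
      rhoR N x x' τ + rhoR N y y' τ + rhoR N y' x (N - τ) := by
  rw [rhoR, show 2 * N - τ = N - τ + τ + (N - τ) by omega, sum_range_add, sum_range_add,
    add_right_comm]
  congr 1
  congr 1
  · refine sum_congr rfl fun i hi => ?_
    rw [mem_range] at hi
    rw [appendSeq_of_lt _ _ (by omega), appendSeq_of_lt _ _ (by omega)]
  · refine sum_congr rfl fun i hi => ?_
    rw [mem_range] at hi
    rw [appendSeq_of_le _ _ (by omega), appendSeq_of_le _ _ (by omega),
      show N - τ + τ + i - N = i by omega, show N - τ + τ + i + τ - N = i + τ by omega]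
  · rw [rhoR, show N - (N - τ) = τ by omega]
    refine sum_congr rfl fun i hi => ?_
    rw [mem_range] at hi
    rw [appendSeq_of_lt _ _ (by omega), appendSeq_of_le _ _ (by omega), mul_comm,
      show N - τ + i + τ - N = i by omega, add_comm (N - τ)]

theorem rhoR_appendSeq_of_ge {τ : ℕ} (hτ : N ≤ τ) :
    rhoR (2 * N) (appendSeq N x y) (appendSeq N x' y') τ = rhoR N x y' (τ - N) := by
  rw [rhoR, rhoR, show 2 * N - τ = N - (τ - N) by omega]
  refine sum_congr rfl fun i hi => ?_
  rw [mem_range] at hi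
  rw [appendSeq_of_lt _ _ (by omega), appendSeq_of_le _ _ (by omega),
    show i + τ - N = i + (τ - N) by omega]

theorem appendSeq_two_mul_sub_one_sub {i : ℕ} (hi : i < N) :
    appendSeq N x y (2 * N - 1 - i) = y (N - 1 - i) := by
  rw [appendSeq_of_le _ _ (by omega), show 2 * N - 1 - i - N = N - 1 - i by omega]

end Append

theorem IsComplementary.appendSeq_revSeq {N : ℕ} {a b : ℕ → ℝ} (h : IsComplementary N a b) :
    IsComplementary (2 * N) (appendSeq N a (revSeq N b)) (appendSeq N b (-revSeq N a)) := by
  intro τ hτ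
  rcases le_total τ N with hτN | hNτ
  · rw [rhoR_appendSeq_of_le _ _ _ _ hτN, rhoR_appendSeq_of_le _ _ _ _ hτN, rhoR_neg_left,
      rhoR_neg_right, rhoR_neg_left, neg_neg, rhoR_revSeq_revSeq, rhoR_revSeq_revSeq]
    linear_combination 2 * h τ hτ + rhoR_revSeq_left N b a (N - τ)
  · rw [rhoR_appendSeq_of_ge _ _ _ _ hNτ, rhoR_appendSeq_of_ge _ _ _ _ hNτ, rhoR_neg_right]
    linear_combination rhoR_revSeq_right N a b (τ - N)

theorem rhoR_appendSeq_revSeq_add_swap_eq_zero {N t τ : ℕ} {a b : ℕ → ℝ} (hhead : ∀ i < t, a i = b i)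
    (ht : t ≤ N) (hτ : 2 * N - t ≤ τ) :
    rhoR (2 * N) (appendSeq N a (revSeq N b)) (appendSeq N b (-revSeq N a)) τ +
      rhoR (2 * N) (appendSeq N b (-revSeq N a)) (appendSeq N a (revSeq N b)) τ = 0 := by
  rw [rhoR_appendSeq_of_ge _ _ _ _ (by omega), rhoR_appendSeq_of_ge _ _ _ _ (by omega),
    rhoR_neg_right, neg_add_eq_zero]
  refine sum_congr rfl fun i hi => ?_
  rw [mem_range] at hi
  rw [revSeq, revSeq, hhead i (by omega), hhead (N - 1 - (i + (τ - N))) (by omega)]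

-- `bracketSeq n x u y = (x, u₀, …, u_{n-1}, y)`
def bracketSeq (n : ℕ) (x : ℂ) (u : ℕ → ℝ) (y : ℂ) : ℕ → ℂ :=
  fun i => if i = 0 then x else if i ≤ n then (u (i - 1) : ℂ) else y

section Bracket

variable (n : ℕ) (x x' y y' : ℂ) (u u' : ℕ → ℝ)

theorem rhoC_bracketSeq {τ : ℕ} (hτ₁ : 1 ≤ τ) (hτn : τ ≤ n) :
    rhoC (n + 2) (bracketSeq n x u y) (bracketSeq n x' u' y') τ =
      x * u' (τ - 1) + rhoR n u u' τ + u (n - τ) * (starRingEnd ℂ) y' := by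
  have hmid : ∀ i ∈ range (n - τ),
      bracketSeq n x u y (i + 1) * (starRingEnd ℂ) (bracketSeq n x' u' y' (i + 1 + τ)) =
        ((u i * u' (i + τ) : ℝ) : ℂ) := fun i hi => by
    rw [mem_range] at hi
    simp only [bracketSeq, if_neg (Nat.succ_ne_zero _), if_neg (show i + 1 + τ ≠ 0 by omega),
      if_pos (show i + 1 ≤ n by omega), if_pos (show i + 1 + τ ≤ n by omega), Complex.conj_ofReal,
      Complex.ofReal_mul, show i + 1 + τ - 1 = i + τ by omega, Nat.add_sub_cancel]
  rw [rhoC, show n + 2 - τ = n - τ + 1 + 1 by omega, sum_range_succ, sum_range_succ',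
    sum_congr rfl hmid, rhoR, Complex.ofReal_sum]
  have hτ₀ : τ ≠ 0 := by omega
  simp only [bracketSeq, zero_add, hτ₀, hτn, Complex.conj_ofReal, if_false, if_true,
    if_neg (show n - τ + 1 ≠ 0 by omega), if_pos (show n - τ + 1 ≤ n by omega),
    if_neg (show ¬ n - τ + 1 + τ ≤ n by omega), if_neg (show n - τ + 1 + τ ≠ 0 by omega),
    Nat.add_sub_cancel]
  ring

theorem rhoC_bracketSeq_top :
    rhoC (n + 2) (bracketSeq n x u y) (bracketSeq n x' u' y') (n + 1) = x * (starRingEnd ℂ) y' := by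
  simp [rhoC, bracketSeq, show n + 2 - (n + 1) = 1 by omega]

end Bracket

theorem appendSeq_revSeq_two_mul_sub_one_sub {N i : ℕ} (x y : ℕ → ℝ) (hi : i < N) :
    appendSeq N x (revSeq N y) (2 * N - 1 - i) = y i := by
  rw [appendSeq_two_mul_sub_one_sub _ _ hi, revSeq_sub_one_sub _ hi]

theorem appendSeq_neg_revSeq_two_mul_sub_one_sub {N i : ℕ} (x y : ℕ → ℝ) (hi : i < N) :
    appendSeq N x (-revSeq N y) (2 * N - 1 - i) = -y i := by
  rw [appendSeq_two_mul_sub_one_sub _ _ hi, Pi.neg_apply, revSeq_sub_one_sub _ hi]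

theorem rhoC_bracketSeq_appendSeq_add_eq_zero {N t τ : ℕ} {a b : ℕ → ℝ}
    (hab : IsComplementary N a b) (hhead : ∀ i < t, a i = b i) (htN : t < N) {x0 x1 y0 y1 : ℂ}
    (cc1 : x0 - (starRingEnd ℂ) y1 = 0) (cc2 : x1 + (starRingEnd ℂ) y0 = 0)
    (cc3 : x0 = x1) (cc4 : (starRingEnd ℂ) y0 = -(starRingEnd ℂ) y1)
    (hτ : (1 ≤ τ ∧ τ ≤ t + 1) ∨ (2 * N + 1 - t ≤ τ ∧ τ ≤ 2 * N + 1)) :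
    rhoC (2 * N + 2) (bracketSeq (2 * N) x0 (appendSeq N a (revSeq N b)) y0)
        (bracketSeq (2 * N) x0 (appendSeq N a (revSeq N b)) y0) τ +
      rhoC (2 * N + 2) (bracketSeq (2 * N) x1 (appendSeq N b (-revSeq N a)) y1)
        (bracketSeq (2 * N) x1 (appendSeq N b (-revSeq N a)) y1) τ = 0 := by
  rcases (show τ = 2 * N + 1 ∨ τ ≤ 2 * N by omega) with rfl | hτn
  · rw [rhoC_bracketSeq_top, rhoC_bracketSeq_top]
    linear_combination x0 * cc4 - (starRingEnd ℂ) y1 * cc3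
  rw [rhoC_bracketSeq _ _ _ _ _ _ _ (by omega) hτn, rhoC_bracketSeq _ _ _ _ _ _ _ (by omega) hτn]
  have hρ : (rhoR (2 * N) (appendSeq N a (revSeq N b)) (appendSeq N a (revSeq N b)) τ : ℂ) +
      rhoR (2 * N) (appendSeq N b (-revSeq N a)) (appendSeq N b (-revSeq N a)) τ = 0 := by
    exact_mod_cast hab.appendSeq_revSeq τ (by omega)
  rcases hτ with hτ | hτ
  · obtain ⟨i, hi, rfl⟩ : ∃ i < N, τ = i + 1 := ⟨τ - 1, by omega, by omega⟩
    rw [Nat.add_sub_cancel, show 2 * N - (i + 1) = 2 * N - 1 - i by omega,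
      appendSeq_of_lt _ _ hi, appendSeq_of_lt _ _ hi, appendSeq_revSeq_two_mul_sub_one_sub _ _ hi,
      appendSeq_neg_revSeq_two_mul_sub_one_sub _ _ hi]
    push_cast
    linear_combination hρ + a i * cc1 + b i * cc2
  · obtain ⟨s, hs, rfl⟩ : ∃ s < t, τ = 2 * N - s := ⟨2 * N - τ, by omega, by omega⟩
    have hsN : s < N := by omega
    rw [show 2 * N - s - 1 = 2 * N - 1 - s by omega, show 2 * N - (2 * N - s) = s by omega,
      appendSeq_of_lt _ _ hsN, appendSeq_of_lt _ _ hsN,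
      appendSeq_revSeq_two_mul_sub_one_sub _ _ hsN,
      appendSeq_neg_revSeq_two_mul_sub_one_sub _ _ hsN, hhead s hs]
    push_cast
    linear_combination hρ + b s * cc3 + b s * cc4

theorem rhoC_bracketSeq_appendSeq_add_swap_eq_zero {N t τ : ℕ} {a b : ℕ → ℝ}
    (hhead : ∀ i < t, a i = b i) (htN : t < N) {x0 x1 y0 y1 : ℂ}
    (cc1 : x0 - (starRingEnd ℂ) y1 = 0) (cc2 : x1 + (starRingEnd ℂ) y0 = 0)
    (cc3 : x0 = x1) (cc4 : (starRingEnd ℂ) y0 = -(starRingEnd ℂ) y1)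
    (hτ₁ : 2 * N + 1 - t ≤ τ) (hτ₂ : τ ≤ 2 * N + 1) :
    rhoC (2 * N + 2) (bracketSeq (2 * N) x0 (appendSeq N a (revSeq N b)) y0)
        (bracketSeq (2 * N) x1 (appendSeq N b (-revSeq N a)) y1) τ +
      rhoC (2 * N + 2) (bracketSeq (2 * N) x1 (appendSeq N b (-revSeq N a)) y1)
        (bracketSeq (2 * N) x0 (appendSeq N a (revSeq N b)) y0) τ = 0 := by
  rcases (show τ = 2 * N + 1 ∨ τ ≤ 2 * N by omega) with rfl | hτn
  · rw [rhoC_bracketSeq_top, rhoC_bracketSeq_top]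
    linear_combination (starRingEnd ℂ) y1 * cc3 + x1 * cc4
  rw [rhoC_bracketSeq _ _ _ _ _ _ _ (by omega) hτn, rhoC_bracketSeq _ _ _ _ _ _ _ (by omega) hτn]
  have hρ : (rhoR (2 * N) (appendSeq N a (revSeq N b)) (appendSeq N b (-revSeq N a)) τ : ℂ) +
      rhoR (2 * N) (appendSeq N b (-revSeq N a)) (appendSeq N a (revSeq N b)) τ = 0 := by
    exact_mod_cast rhoR_appendSeq_revSeq_add_swap_eq_zero hhead htN.le (by omega)
  obtain ⟨s, hs, rfl⟩ : ∃ s < t, τ = 2 * N - s := ⟨2 * N - τ, by omega, by omega⟩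
  have hsN : s < N := by omega
  rw [show 2 * N - s - 1 = 2 * N - 1 - s by omega, show 2 * N - (2 * N - s) = s by omega,
    appendSeq_of_lt _ _ hsN, appendSeq_of_lt _ _ hsN, appendSeq_revSeq_two_mul_sub_one_sub _ _ hsN,
    appendSeq_neg_revSeq_two_mul_sub_one_sub _ _ hsN]
  push_cast
  linear_combination hρ - a s * cc1 + b s * cc2

theorem isCZCP_bracketSeq_appendSeq {N t : ℕ} {a b : ℕ → ℝ} (hab : IsComplementary N a b)
    (hhead : ∀ i < t, a i = b i) (htN : t < N) {x0 x1 y0 y1 : ℂ}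
    (cc1 : x0 - (starRingEnd ℂ) y1 = 0) (cc2 : x1 + (starRingEnd ℂ) y0 = 0)
    (cc3 : x0 = x1) (cc4 : (starRingEnd ℂ) y0 = -(starRingEnd ℂ) y1) :
    IsCZCP (2 * N + 2) (t + 1) (bracketSeq (2 * N) x0 (appendSeq N a (revSeq N b)) y0)
      (bracketSeq (2 * N) x1 (appendSeq N b (-revSeq N a)) y1) :=
  ⟨fun _ hτ => rhoC_bracketSeq_appendSeq_add_eq_zero hab hhead htN cc1 cc2 cc3 cc4 (by omega),
    fun _ hτ => rhoC_bracketSeq_appendSeq_add_swap_eq_zero hhead htN cc1 cc2 cc3 cc4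
      (by omega) (by omega)⟩

-- Over `ℤ` the finitely many correlation sums of the kernels are checked by `decide`.
theorem isComplementary_intCast {L : ℕ} {a b : ℕ → ℤ}
    (h : ∀ τ ∈ Ico 1 L, ∑ k ∈ range (L - τ), (a k * a (k + τ) + b k * b (k + τ)) = 0) :
    IsComplementary L (fun i => (a i : ℝ)) (fun i => (b i : ℝ)) := by
  intro τ hτ
  rcases lt_or_ge τ L with hτL | hτL
  · simp only [rhoR, ← sum_add_distrib]
    exact_mod_cast h τ (mem_Ico.2 ⟨hτ, hτL⟩)
  · simp only [rhoR_eq_zero_of_le hτL, add_zero]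

theorem headEqTailNeg_intCast {L t : ℕ} {a b : ℕ → ℤ}
    (h : (∀ i < t, a i = b i) ∧ ∀ i ∈ Ico (L - t) L, a i = -b i) :
    HeadEqTailNeg L t (fun i => (a i : ℝ)) (fun i => (b i : ℝ)) :=
  ⟨fun i hi => by dsimp only; exact_mod_cast h.1 i hi,
    fun i hi₁ hi₂ => by dsimp only; exact_mod_cast h.2 i (mem_Ico.2 ⟨hi₁, hi₂⟩)⟩

theorem K10a_eq : K10a = fun i => (([1, 1, -1, 1, -1, 1, -1, -1, 1, 1] : List ℤ).getD i 0 : ℝ) := by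
  funext i
  rw [← List.getD_map (f := (Int.cast : ℤ → ℝ))]
  simp [K10a]

theorem K10b_eq : K10b = fun i => (([1, 1, -1, 1, 1, 1, 1, 1, -1, -1] : List ℤ).getD i 0 : ℝ) := by
  funext i
  rw [← List.getD_map (f := (Int.cast : ℤ → ℝ))]
  simp [K10b]

theorem K26a_eq : K26a = fun i => (([1, 1, 1, 1, -1, 1, 1, -1, -1, 1, -1, 1, -1, 1, -1, -1, 1, -1, 1,
    1, 1, -1, -1, 1, 1, 1] : List ℤ).getD i 0 : ℝ) := by
  funext i
  rw [← List.getD_map (f := (Int.cast : ℤ → ℝ))]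
  simp [K26a]

theorem K26b_eq : K26b = fun i => (([1, 1, 1, 1, -1, 1, 1, -1, -1, 1, -1, 1, 1, 1, 1, 1, -1, 1, -1,
    -1, -1, 1, 1, -1, -1, -1] : List ℤ).getD i 0 : ℝ) := by
  funext i
  rw [← List.getD_map (f := (Int.cast : ℤ → ℝ))]
  simp [K26b]

theorem isComplementary_K10 : IsComplementary 10 K10a K10b := by
  rw [K10a_eq, K10b_eq]
  exact isComplementary_intCast (by decide)

theorem isComplementary_K26 : IsComplementary 26 K26a K26b := by
  rw [K26a_eq, K26b_eq]
  exact isComplementary_intCast (by decide)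

theorem headEqTailNeg_K26 : HeadEqTailNeg 26 12 K26a K26b := by
  rw [K26a_eq, K26b_eq]
  exact headEqTailNeg_intCast (by decide)

-- `K₂₆` has `t = 12` for `L = 26`, and Turyn's construction multiplies `t` and `L` by the
-- same factor.
def IsTurynSeed (L : ℕ) (a b : ℕ → ℝ) : Prop :=
  0 < L ∧ IsComplementary L a b ∧ ∃ t, 13 * t = 6 * L ∧ HeadEqTailNeg L t a b

theorem IsTurynSeed.turynPair {M K : ℕ} {p q c d : ℕ → ℝ} (h : IsTurynSeed K c d)
    (hpq : IsComplementary M p q) (hM : 0 < M) :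
    IsTurynSeed (M * K) (turynPair M K p q c d).1 (turynPair M K p q c d).2 := by
  obtain ⟨hK, hcd, t, ht, hends⟩ := h
  rw [mul_comm]
  exact ⟨Nat.mul_pos hK hM, hcd.turynPair hpq hM, t * M, by rw [← mul_assoc, ht, mul_assoc],
    hends.turynPair (by omega) hM p q⟩

theorem isTurynSeed_K26 : IsTurynSeed 26 K26a K26b :=
  ⟨by norm_num, isComplementary_K26, 12, rfl, headEqTailNeg_K26⟩

theorem stmt_9_general (β γ : ℕ)
    (choice : ℕ → Bool)
    (Len : ℕ → ℕ) (hLen0 : Len 0 = 26)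
    (hLenRec : ∀ j < β + (γ - 1), Len (j + 1) = (if choice j then 10 else 26) * Len j)
    (P : ℕ → (ℕ → ℝ) × (ℕ → ℝ))
    (hP0 : P 0 = (K26a, K26b))
    (hPrec : ∀ j < β + (γ - 1),
      P (j + 1) = if choice j then turynPair 10 (Len j) K10a K10b (P j).1 (P j).2
                  else turynPair 26 (Len j) K26a K26b (P j).1 (P j).2)
    (N : ℕ) (hNLen : Len (β + (γ - 1)) = N)
    (a b : ℕ → ℝ) (ha : a = (P (β + (γ - 1))).1) (hb : b = (P (β + (γ - 1))).2)
    (e f : ℕ → ℝ)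
    (he : ∀ i, e i = if i < N then a i else b (N - 1 - (i - N)))
    (hf : ∀ i, f i = if i < N then b i else -a (N - 1 - (i - N)))
    (x0 x1 y0 y1 : ℂ)
    (cc1 : x0 - (starRingEnd ℂ) y1 = 0) (cc2 : x1 + (starRingEnd ℂ) y0 = 0)
    (cc3 : x0 = x1) (cc4 : (starRingEnd ℂ) y0 = -(starRingEnd ℂ) y1)
    (g h : ℕ → ℂ)
    (hg : ∀ i, g i = if i = 0 then x0 else if i ≤ 2 * N then ((e (i - 1) : ℝ) : ℂ) else y0)
    (hh : ∀ i, h i = if i = 0 then x1 else if i ≤ 2 * N then ((f (i - 1) : ℝ) : ℂ) else y1) :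
    IsCZCP (2 * N + 2) (12 * N / 26 + 1) g h := by
  have hseed : ∀ j ≤ β + (γ - 1), IsTurynSeed (Len j) (P j).1 (P j).2 := by
    intro j
    induction j with
    | zero => exact fun _ => hLen0 ▸ hP0 ▸ isTurynSeed_K26
    | succ j ih =>
      intro hj
      rw [hLenRec j hj, hPrec j hj]
      cases choice j
      · exact (ih (by omega)).turynPair isComplementary_K26 (by norm_num)
      · exact (ih (by omega)).turynPair isComplementary_K10 (by norm_num)
  have hfinal := hseed _ le_rfl
  rw [hNLen, ← ha, ← hb] at hfinal
  obtain ⟨hN, hab, t, ht, hhead, -⟩ := hfinal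
  obtain rfl : e = appendSeq N a (revSeq N b) := funext he
  obtain rfl : f = appendSeq N b (-revSeq N a) := funext hf
  obtain rfl : g = bracketSeq (2 * N) x0 (appendSeq N a (revSeq N b)) y0 := funext hg
  obtain rfl : h = bracketSeq (2 * N) x1 (appendSeq N b (-revSeq N a)) y1 := funext hh
  rw [show 12 * N / 26 = t by omega]
  exact isCZCP_bracketSeq_appendSeq hab hhead (by omega) cc1 cc2 cc3 cc4

/-- Theorem 3 of the paper, case `N = 10^β·26^γ`: let `(a, b)` be a binary
GCP of length `N = 10^β·26^γ` (`β ≥ 0`, `γ ≥ 1`) obtained by the recursion starting from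
`K₂₆` and applying Turyn's construction with kernel `K₁₀` exactly `β` times and with
kernel `K₂₆` exactly `γ - 1` times, in any order (encoded by `choice : ℕ → Bool`, where
`true` means "apply `K₁₀`", with intermediate lengths tracked by `Len`).  Put
`c_i = b_{N-1-i}`, `d_i = -a_{N-1-i}`, `e = a‖c`, `f = b‖d` (length `2N`), and let
`x₀, x₁, y₀, y₁` be unimodular complex numbers with `x₀ - conj y₁ = 0`,
`x₁ + conj y₀ = 0`, `x₀ = x₁`, `conj y₀ = -conj y₁`.  Then
`g = (x₀, e₀, …, e_{2N-1}, y₀)` and `h = (x₁, f₀, …, f_{2N-1}, y₁)` form a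
`(2N+2, 12N/26+1)`-CZCP. -/
theorem stmt_9 (β γ : ℕ) (hγ : 1 ≤ γ)
    (choice : ℕ → Bool)
    (hcount : ((Finset.range (β + (γ - 1))).filter fun j => choice j = true).card = β)
    (Len : ℕ → ℕ) (hLen0 : Len 0 = 26)
    (hLenRec : ∀ j < β + (γ - 1), Len (j + 1) = (if choice j then 10 else 26) * Len j)
    (P : ℕ → (ℕ → ℝ) × (ℕ → ℝ))
    (hP0 : P 0 = (K26a, K26b))
    (hPrec : ∀ j < β + (γ - 1),
      P (j + 1) = if choice j then turynPair 10 (Len j) K10a K10b (P j).1 (P j).2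
                  else turynPair 26 (Len j) K26a K26b (P j).1 (P j).2)
    (N : ℕ) (hN : N = 10 ^ β * 26 ^ γ) (hNLen : Len (β + (γ - 1)) = N)
    (a b : ℕ → ℝ) (ha : a = (P (β + (γ - 1))).1) (hb : b = (P (β + (γ - 1))).2)
    (e f : ℕ → ℝ)
    (he : ∀ i, e i = if i < N then a i else b (N - 1 - (i - N)))
    (hf : ∀ i, f i = if i < N then b i else -a (N - 1 - (i - N)))
    (x0 x1 y0 y1 : ℂ)
    (hx0 : ‖x0‖ = 1) (hx1 : ‖x1‖ = 1)
    (hy0 : ‖y0‖ = 1) (hy1 : ‖y1‖ = 1)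
    (cc1 : x0 - (starRingEnd ℂ) y1 = 0) (cc2 : x1 + (starRingEnd ℂ) y0 = 0)
    (cc3 : x0 = x1) (cc4 : (starRingEnd ℂ) y0 = -(starRingEnd ℂ) y1)
    (g h : ℕ → ℂ)
    (hg : ∀ i, g i = if i = 0 then x0 else if i ≤ 2 * N then ((e (i - 1) : ℝ) : ℂ) else y0)
    (hh : ∀ i, h i = if i = 0 then x1 else if i ≤ 2 * N then ((f (i - 1) : ℝ) : ℂ) else y1) :
    IsCZCP (2 * N + 2) (12 * N / 26 + 1) g h :=
  stmt_9_general β γ choice Len hLen0 hLenRec P hP0 hPrec N hNLen a b ha hb e f he hf x0 x1 y0 y1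
    cc1 cc2 cc3 cc4 g h hg hh
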